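/- If a differentiable function h : [0,∞) → ℝ satisfies h'(t) ≥ −α(h(t)) for a locally Lipschitz extended class-K function α, and h(0) ≥ 0, then h(t) ≥ 0 for all t ≥ 0 (forward invariance of the zero-superlevel set under the ZBF condition). -/
import Mathlib

theorem stmt_4 (h : ℝ → ℝ) (α : ℝ → ℝ) (hα_cont : Continuous α)
    (hα_mono : StrictMono α) (hα_lip : LocallyLipschitz α) (hα0 : α 0 = 0)
    (hdiff : Differentiable ℝ h)
    (hineq : ∀ t ≥ (0:ℝ), deriv h t ≥ -α (h t)) (h0 : 0 ≤ h 0) :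
    ∀ t ≥ (0:ℝ), 0 ≤ h t := by
  intro t₀ ht₀
  by_contra hneg
  push_neg at hneg
  set S : Set ℝ := {t | t ∈ Set.Icc (0:ℝ) t₀ ∧ 0 ≤ h t} with hS
  have hSne : S.Nonempty := ⟨0, ⟨le_refl 0, ht₀⟩, h0⟩
  have hSbdd : BddAbove S := ⟨t₀, fun x hx => hx.1.2⟩
  have hSclosed : IsClosed S := by
    have hEq : S = Set.Icc 0 t₀ ∩ h ⁻¹' Set.Ici 0 := by
      ext x; simp [hS, Set.mem_Icc, and_assoc]
    rw [hEq]; exact isClosed_Icc.inter (isClosed_Ici.preimage hdiff.continuous)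
  set s := sSup S with hsdef
  have hsS : s ∈ S := hSclosed.csSup_mem hSne hSbdd
  have hs0 : 0 ≤ s := hsS.1.1
  have hst : s ≤ t₀ := hsS.1.2
  have hslt : s < t₀ := lt_of_le_of_ne hst (fun e => absurd (e ▸ hsS.2) (not_le.mpr hneg))
  have hmono : MonotoneOn h (Set.Icc s t₀) := by
    apply monotoneOn_of_deriv_nonneg (convex_Icc s t₀)
      hdiff.continuous.continuousOn
      (hdiff.differentiableOn)
    intro x hx
    rw [interior_Icc] at hx
    have hx0 : 0 ≤ x := le_of_lt (lt_of_le_of_lt hs0 hx.1)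
    have hhx : h x < 0 := by
      by_contra hge
      push_neg at hge
      have hxS : x ∈ S := ⟨⟨hx0, le_of_lt hx.2⟩, hge⟩
      exact absurd (le_csSup hSbdd hxS) (not_le.mpr hx.1)
    have hαneg : α (h x) < 0 := by
      have := hα_mono hhx
      rwa [hα0] at this
    linarith [hineq x hx0]
  have := hmono ⟨le_refl s, hst⟩ ⟨hslt.le, le_refl t₀⟩ hslt.le
  linarith [hsS.2]
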